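/- arXiv:2412.08415 — 2 statements merged into one kernel-verified Lean document; each statement's English description precedes it below -/
import Mathlib

section
/- Let H₀(q,p) = (p₁²+p₂²)/2 + p₁q₂ − p₂q₁ on ℝ²×ℝ², and let h : ℝ²×ℝ² → ℝ be a smooth function whose differential dh has compact support and which satisfies h > 0 everywhere and h(q,p) − dh_{(q,p)}(0,p) > 0 everywhere. Then for every q ∈ ℝ² the set {p ∈ ℝ² : H₀(q,p) = h(q,p)} is compact and nonempty. -/
open Set

abbrev R2 : Type := ℝ × ℝ
abbrev Phase : Type := R2 × R2

/-- The Copernican Hamiltonian `H₀(q,p) = (p₁² + p₂²)/2 + p₁q₂ − p₂q₁`. -/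
noncomputable def H0 (x : Phase) : ℝ :=
  (x.2.1 ^ 2 + x.2.2 ^ 2) / 2 + x.2.1 * x.1.2 - x.2.2 * x.1.1

/-- For `h ∈ 𝓗` (smooth, `dh` compactly supported, `h > 0`, `h − dh(p∂ₚ) > 0`),
for every `q ∈ ℝ²` the set `{p : H₀(q,p) = h(q,p)}` is compact and nonempty. -/
theorem stmt0 (h : Phase → ℝ) (hsm : ContDiff ℝ (⊤ : ℕ∞) h)
    (hsupp : HasCompactSupport fun x => fderiv ℝ h x)
    (hpos : ∀ x, 0 < h x)
    (hLiou : ∀ x : Phase, 0 < h x - fderiv ℝ h x ((0, 0), x.2)) :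
    ∀ q : R2, IsCompact {p : R2 | H0 (q, p) = h (q, p)} ∧
      {p : R2 | H0 (q, p) = h (q, p)}.Nonempty := by
  intro q
  -- h is Lipschitz with some constant M ≥ 0
  obtain ⟨B, hB⟩ := hsupp.exists_bound_of_continuous (hsm.continuous_fderiv (by simp))
  set K : NNReal := ⟨max B 0, le_max_right _ _⟩ with hKdef
  have hK : LipschitzWith K h := by
    apply lipschitzWith_of_nnnorm_fderiv_le (hsm.differentiable (by simp))
    intro x
    simp only [← NNReal.coe_le_coe, coe_nnnorm, hKdef]
    exact NNReal.coe_le_coe.mp (le_trans (hB x) (le_max_left B 0))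
  set M : ℝ := (K : ℝ) with hMdef
  have hM0 : 0 ≤ M := K.coe_nonneg
  set C : ℝ := h (q, (0, 0)) with hCdef
  have hC0 : 0 < C := hpos _
  set Q : ℝ := max |q.1| |q.2| with hQdef
  have hQ0 : 0 ≤ Q := le_trans (abs_nonneg _) (le_max_left _ _)
  set R : ℝ := 4 * Q + 2 * M + 2 * C + 2 with hRdef
  have hR0 : 0 < R := by positivity
  -- key growth estimate
  have key : ∀ p : R2, R ≤ ‖p‖ → h (q, p) < H0 (q, p) := by
    intro p hp
    have hlip : h (q, p) ≤ C + M * ‖p‖ := by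
      have := hK.dist_le_mul (q, p) (q, (0, 0))
      rw [Prod.dist_eq] at this
      simp only [dist_self] at this
      have hd : dist (q, p).2 (q, (0, 0)).2 = ‖p‖ := by
        simp [Prod.dist_eq, Real.dist_eq, Prod.norm_def, Real.norm_eq_abs]
      rw [hd] at this
      have h1 : h (q, p) - C ≤ dist (h (q, p)) (h (q, (0, 0))) := by
        rw [Real.dist_eq]; exact le_abs_self _
      have h2 : max 0 ‖p‖ = ‖p‖ := max_eq_right (norm_nonneg _)
      rw [h2] at this
      linarith
    have hn1 : |p.1| ≤ ‖p‖ := by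
      rw [Prod.norm_def, Real.norm_eq_abs, Real.norm_eq_abs]; exact le_max_left _ _
    have hn2 : |p.2| ≤ ‖p‖ := by
      rw [Prod.norm_def, Real.norm_eq_abs, Real.norm_eq_abs]; exact le_max_right _ _
    have hsq : ‖p‖ ^ 2 ≤ p.1 ^ 2 + p.2 ^ 2 := by
      rw [Prod.norm_def, Real.norm_eq_abs, Real.norm_eq_abs]
      rcases max_cases |p.1| |p.2| with ⟨he, _⟩ | ⟨he, _⟩ <;> rw [he] <;> nlinarith [sq_nonneg p.1, sq_nonneg p.2, sq_abs p.1, sq_abs p.2]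
    have hH : ‖p‖ ^ 2 / 2 - 2 * Q * ‖p‖ ≤ H0 (q, p) := by
      have h1 : |q.1| ≤ Q := le_max_left _ _
      have h2 : |q.2| ≤ Q := le_max_right _ _
      have e1 : p.1 * q.2 ≥ -(‖p‖ * Q) := by
        nlinarith [abs_nonneg p.1, neg_abs_le (p.1 * q.2), abs_mul p.1 q.2,
          mul_le_mul hn1 h2 (abs_nonneg q.2) (norm_nonneg p)]
      have e2 : p.2 * q.1 ≤ ‖p‖ * Q := by
        calc p.2 * q.1 ≤ |p.2 * q.1| := le_abs_self _
        _ = |p.2| * |q.1| := abs_mul _ _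
        _ ≤ ‖p‖ * Q := mul_le_mul hn2 h1 (abs_nonneg q.1) (norm_nonneg p)
      simp only [H0]
      nlinarith
    have hbig : C + M * ‖p‖ < ‖p‖ ^ 2 / 2 - 2 * Q * ‖p‖ := by
      nlinarith [norm_nonneg p]
    linarith
  have hcont : Continuous fun p : R2 => H0 (q, p) - h (q, p) := by
    have h1 : Continuous fun p : R2 => H0 (q, p) := by
      simp only [H0]; fun_prop
    exact h1.sub (hsm.continuous.comp (by fun_prop))
  constructor
  · -- compactness
    have hclosed : IsClosed {p : R2 | H0 (q, p) = h (q, p)} := by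
      have : {p : R2 | H0 (q, p) = h (q, p)} = (fun p => H0 (q, p) - h (q, p)) ⁻¹' {0} := by
        ext p; simp [sub_eq_zero]
      rw [this]
      exact IsClosed.preimage hcont isClosed_singleton
    apply (isCompact_closedBall (0 : R2) R).of_isClosed_subset hclosed
    intro p hp
    rw [Metric.mem_closedBall, dist_zero_right]
    by_contra hcon
    push_neg at hcon
    exact absurd hp.symm (ne_of_lt (key p hcon.le))
  · -- nonemptiness via IVT
    set f : R2 → ℝ := fun p => H0 (q, p) - h (q, p) with hfdef
    have hf0 : f (0, 0) < 0 := by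
      simp only [hfdef, H0]
      norm_num
      exact hC0
    have hnR : ‖((R, 0) : R2)‖ = R := by
      simp [Prod.norm_def, Real.norm_eq_abs, abs_of_pos hR0, hR0.le]
    have hfR : 0 < f (R, 0) := by
      have := key (R, 0) (by rw [hnR])
      simp only [hfdef]; linarith
    have := intermediate_value_univ ((0, 0) : R2) ((R, 0) : R2) hcont
    have h0mem : (0 : ℝ) ∈ Icc (f (0, 0)) (f (R, 0)) := ⟨hf0.le, hfR.le⟩
    obtain ⟨p, hp⟩ := this h0mem
    exact ⟨p, sub_eq_zero.mp hp⟩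
end

section
/- Fix q₀,q₁ ∈ ℝ². Let v = (q,p) : ℝ×[0,1] → ℝ²×ℝ² be smooth and η : ℝ → ℝ smooth, with q(s,0) = q₀ and q(s,1) = q₁ for all s ∈ ℝ, satisfying the Floer equation ∂_s v(s,t) = −𝕁(∂_t v(s,t) − η(s)·X_{H₀}(v(s,t))), where 𝕁(a,b) := (b,−a) and X_{H₀}(q,p) = (p₁+q₂, p₂−q₁, p₂, −p₁). Let σ : ℝ → [0,1] be the even 2-periodic extension of the identity on [0,1] (σ(t) = |t| for |t| ≤ 1 and σ(t+2) = σ(t)). Then the function G : ℝ×ℝ → ℝ, G(s,t) := |p(s, σ(t))|²/2, is twice continuously differentiable. -/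
open Set

noncomputable section

def sq2 (a : R2) : ℝ := a.1 ^ 2 + a.2 ^ 2

/-- The standard compatible complex structure `𝕁(a,b) = (b, −a)`. -/
def JJ (x : Phase) : Phase := (x.2, -x.1)

/-- The Hamiltonian vector field of `H₀`: `X_{H₀}(q,p) = (p₁+q₂, p₂−q₁, p₂, −p₁)`. -/
def XH0 (x : Phase) : Phase := ((x.2.1 + x.1.2, x.2.2 - x.1.1), (x.2.2, -x.2.1))

end

open Asymptotics Filter

section Aux

noncomputable def fstL : ℝ × ℝ →L[ℝ] ℝ := ContinuousLinearMap.fst ℝ ℝ ℝ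
noncomputable def sndL : ℝ × ℝ →L[ℝ] ℝ := ContinuousLinearMap.snd ℝ ℝ ℝ

noncomputable def p1 (F : ℝ × ℝ → ℝ) (z : ℝ × ℝ) : ℝ := fderiv ℝ F z (1, 0)
noncomputable def p2 (F : ℝ × ℝ → ℝ) (z : ℝ × ℝ) : ℝ := fderiv ℝ F z (0, 1)

lemma st8_le1 : ((⊤:ℕ∞) : WithTop ℕ∞) ≠ 0 := by simp
lemma st8_succ : ((⊤:ℕ∞) : WithTop ℕ∞) + 1 ≤ ((⊤:ℕ∞) : WithTop ℕ∞) := by norm_cast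

lemma clm_apply_decomp (L : ℝ × ℝ →L[ℝ] ℝ) (h k : ℝ) :
    L (h, k) = h * L (1, 0) + k * L (0, 1) := by
  have : ((h, k) : ℝ × ℝ) = h • ((1:ℝ), (0:ℝ)) + k • ((0:ℝ), (1:ℝ)) := by
    simp [Prod.ext_iff]
  rw [this, map_add, map_smul, map_smul, smul_eq_mul, smul_eq_mul]

lemma clm_decomp (L : ℝ × ℝ →L[ℝ] ℝ) : L = L (1, 0) • fstL + L (0, 1) • sndL := by
  ext w
  · simp [fstL, sndL]
  · simp [fstL, sndL]

lemma st8_sign_mul_abs (x : ℝ) : Real.sign x * |x| = x := by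
  rcases lt_trichotomy x 0 with h | h | h
  · rw [Real.sign_of_neg h, abs_of_neg h]; ring
  · simp [h]
  · rw [Real.sign_of_pos h, abs_of_pos h]; ring

lemma st8_abs_sign_le (x : ℝ) : |Real.sign x| ≤ 1 := by
  rcases lt_trichotomy x 0 with h | h | h
  · rw [Real.sign_of_neg h]; norm_num
  · simp [h]
  · rw [Real.sign_of_pos h]; norm_num

lemma slice1 {E : Type*} [NormedAddCommGroup E] [NormedSpace ℝ E] {f : ℝ × ℝ → E}
    (hf : Differentiable ℝ f) (s c : ℝ) :
    HasDerivAt (fun a => f (a, c)) (fderiv ℝ f (s, c) (1, 0)) s := by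
  have h1 : HasDerivAt (fun a : ℝ => ((a, c) : ℝ × ℝ)) ((1:ℝ), (0:ℝ)) s :=
    (hasDerivAt_id s).prodMk (hasDerivAt_const s c)
  exact (hf (s, c)).hasFDerivAt.comp_hasDerivAt s h1

lemma slice2 {E : Type*} [NormedAddCommGroup E] [NormedSpace ℝ E] {f : ℝ × ℝ → E}
    (hf : Differentiable ℝ f) (s c : ℝ) :
    HasDerivAt (fun b => f (s, b)) (fderiv ℝ f (s, c) (0, 1)) c := by
  have h1 : HasDerivAt (fun b : ℝ => ((s, b) : ℝ × ℝ)) ((0:ℝ), (1:ℝ)) c :=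
    (hasDerivAt_const c s).prodMk (hasDerivAt_id c)
  exact (hf (s, c)).hasFDerivAt.comp_hasDerivAt c h1

lemma p1_zero_of_const {φ : ℝ × ℝ → ℝ} (hφ : Differentiable ℝ φ) {c d : ℝ}
    (hc : ∀ a, φ (a, c) = d) (s : ℝ) : p1 φ (s, c) = 0 := by
  have h := slice1 hφ s c
  have h2 : HasDerivAt (fun _ : ℝ => d) (fderiv ℝ φ (s, c) (1, 0)) s :=
    h.congr_of_eventuallyEq (Filter.Eventually.of_forall fun a => (hc a).symm)
  exact h2.unique (hasDerivAt_const s d)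

/-- Schwarz symmetry for the mixed partials. -/
lemma swap_p (F : ℝ × ℝ → ℝ) (hF : ContDiff ℝ (⊤:ℕ∞) F) (z : ℝ × ℝ) :
    p2 (fun w => p1 F w) z = p1 (fun w => p2 F w) z := by
  have hdF : ContDiff ℝ (⊤:ℕ∞) (fderiv ℝ F) := hF.fderiv_right st8_succ
  have hdd : DifferentiableAt ℝ (fderiv ℝ F) z :=
    (hdF.differentiable st8_le1) z
  have hsym := second_derivative_symmetric
    (fun y => ((hF.differentiable st8_le1) y).hasFDerivAt) hdd.hasFDerivAt
  have key : ∀ a b : ℝ × ℝ,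
      fderiv ℝ (fun w => fderiv ℝ F w a) z b = fderiv ℝ (fderiv ℝ F) z b a := by
    intro a b
    have hc : HasFDerivAt (fun w => (ContinuousLinearMap.apply ℝ ℝ a) (fderiv ℝ F w))
        ((ContinuousLinearMap.apply ℝ ℝ a).comp (fderiv ℝ (fderiv ℝ F) z)) z :=
      ((ContinuousLinearMap.apply ℝ ℝ a).hasFDerivAt).comp z hdd.hasFDerivAt
    have : fderiv ℝ (fun w => fderiv ℝ F w a) z =
        (ContinuousLinearMap.apply ℝ ℝ a).comp (fderiv ℝ (fderiv ℝ F) z) := hc.fderiv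
    rw [this]; rfl
  unfold p1 p2
  rw [key, key, hsym]

end Aux

section Refl

noncomputable def Keven (F : ℝ × ℝ → ℝ) (z : ℝ × ℝ) : ℝ × ℝ →L[ℝ] ℝ :=
  p1 F (z.1, |z.2|) • fstL + (Real.sign z.2 * p2 F (z.1, |z.2|)) • sndL

noncomputable def Kodd (φ : ℝ × ℝ → ℝ) (z : ℝ × ℝ) : ℝ × ℝ →L[ℝ] ℝ :=
  (Real.sign z.2 * p1 φ (z.1, |z.2|)) • fstL + p2 φ (z.1, |z.2|) • sndL

/-- The negation-in-second-coordinate map. -/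
noncomputable def NL : ℝ × ℝ →L[ℝ] ℝ × ℝ :=
  (ContinuousLinearMap.fst ℝ ℝ ℝ).prod (-(ContinuousLinearMap.snd ℝ ℝ ℝ))

lemma NL_apply (w : ℝ × ℝ) : NL w = (w.1, -w.2) := rfl

lemma norm_rho (w : ℝ × ℝ) : ‖((w.1, |w.2|) : ℝ × ℝ)‖ = ‖w‖ := by
  rw [Prod.norm_def, Prod.norm_def]
  simp [Real.norm_eq_abs, abs_abs]

lemma tendsto_rho : Tendsto (fun w : ℝ × ℝ => ((w.1, |w.2|) : ℝ × ℝ)) (nhds 0) (nhds 0) := by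
  have hc : Continuous fun w : ℝ × ℝ => ((w.1, |w.2|) : ℝ × ℝ) :=
    continuous_fst.prodMk continuous_snd.abs
  have := hc.tendsto 0
  simp at this; exact this

lemma hasFDerivAt_even (F : ℝ × ℝ → ℝ) (hF : ContDiff ℝ (⊤:ℕ∞) F)
    (h0 : ∀ s, p2 F (s, 0) = 0) (z : ℝ × ℝ) :
    HasFDerivAt (fun w : ℝ × ℝ => F (w.1, |w.2|)) (Keven F z) z := by
  have hdiff : Differentiable ℝ F := hF.differentiable st8_le1
  rcases lt_trichotomy z.2 0 with hz | hz | hz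
  · -- z.2 < 0 : locally F (w.1, -w.2) = F ∘ NL
    have hD : HasFDerivAt (fun w => F (NL w)) ((fderiv ℝ F (NL z)).comp NL) z :=
      ((hdiff (NL z)).hasFDerivAt).comp z NL.hasFDerivAt
    have hK : Keven F z = (fderiv ℝ F (NL z)).comp NL := by
      rw [clm_decomp ((fderiv ℝ F (NL z)).comp NL)]
      unfold Keven
      rw [abs_of_neg hz, Real.sign_of_neg hz]
      congr 1
      · congr 1
        show p1 F (z.1, -z.2) = fderiv ℝ F (NL z) (NL (1, 0))
        rw [NL_apply, NL_apply]; norm_num [p1]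
      · congr 1
        show -1 * p2 F (z.1, -z.2) = fderiv ℝ F (NL z) (NL (0, 1))
        rw [NL_apply, NL_apply]
        have : ((0:ℝ), -(1:ℝ)) = -((0:ℝ),(1:ℝ)) := by simp [Prod.ext_iff]
        rw [this, map_neg]
        simp [p2]
    rw [hK]
    refine hD.congr_of_eventuallyEq ?_
    have hev : ∀ᶠ w : ℝ × ℝ in nhds z, w.2 < 0 :=
      (continuous_snd.tendsto z).eventually (eventually_lt_nhds hz)
    exact hev.mono fun w hw => by
      show F (w.1, |w.2|) = F (NL w)
      rw [NL_apply, abs_of_neg hw]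
  · -- z.2 = 0 : little-o argument
    rw [hasFDerivAt_iff_isLittleO_nhds_zero]
    have hD : HasFDerivAt F (fderiv ℝ F (z.1, 0)) (z.1, 0) := (hdiff (z.1, 0)).hasFDerivAt
    have he := hasFDerivAt_iff_isLittleO_nhds_zero.mp hD
    have h1 := he.comp_tendsto tendsto_rho
    have h2 : ((fun w : ℝ × ℝ => w) ∘ fun w : ℝ × ℝ => ((w.1, |w.2|) : ℝ × ℝ)) =O[nhds 0]
        (fun w : ℝ × ℝ => w) := by
      apply Asymptotics.isBigO_of_le
      intro w
      show ‖((w.1, |w.2|) : ℝ × ℝ)‖ ≤ ‖w‖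
      rw [norm_rho]
    have h3 := h1.trans_isBigO h2
    have heq : (fun w : ℝ × ℝ => F ((z + w).1, |(z + w).2|) - F (z.1, |z.2|) - Keven F z w) =
        ((fun w => F ((z.1, 0) + w) - F (z.1, 0) - fderiv ℝ F (z.1, 0) w) ∘
          fun w : ℝ × ℝ => ((w.1, |w.2|) : ℝ × ℝ)) := by
      funext w
      have e1 : fderiv ℝ F (z.1, 0) (w.1, |w.2|) = w.1 * p1 F (z.1, 0) := by
        rw [clm_apply_decomp]
        have h0' : fderiv ℝ F (z.1, 0) (0, 1) = 0 := h0 z.1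
        rw [h0']
        simp [p1]
      have e2 : Keven F z w = p1 F (z.1, 0) * w.1 := by
        unfold Keven
        rw [hz]
        simp [Real.sign_zero, fstL, sndL]
      simp only [Function.comp_apply, Prod.fst_add, Prod.snd_add]
      rw [hz, e1, e2]
      have : ((z.1 + w.1, |0 + w.2|) : ℝ × ℝ) = ((z.1, 0) + (w.1, |w.2|) : ℝ × ℝ) := by
        simp [Prod.ext_iff]
      rw [zero_add, abs_zero]
      have h4 : F (z.1 + w.1, |w.2|) = F ((z.1, 0) + (w.1, |w.2|)) := by norm_num
      rw [h4]; ring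
    rw [heq]
    exact h3
  · -- 0 < z.2
    have hD : HasFDerivAt F (fderiv ℝ F z) z := (hdiff z).hasFDerivAt
    have hK : Keven F z = fderiv ℝ F z := by
      rw [clm_decomp (fderiv ℝ F z)]
      unfold Keven
      rw [abs_of_pos hz, Real.sign_of_pos hz, one_mul]
      rfl
    rw [hK]
    refine hD.congr_of_eventuallyEq ?_
    have hev : ∀ᶠ w : ℝ × ℝ in nhds z, 0 < w.2 :=
      (continuous_snd.tendsto z).eventually (eventually_gt_nhds hz)
    exact hev.mono fun w hw => by
      show F (w.1, |w.2|) = F w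
      rw [abs_of_pos hw]

end Refl

section Refl2

lemma hasFDerivAt_odd (φ : ℝ × ℝ → ℝ) (hφ : ContDiff ℝ (⊤:ℕ∞) φ)
    (h0 : ∀ s, φ (s, 0) = 0) (z : ℝ × ℝ) :
    HasFDerivAt (fun w : ℝ × ℝ => Real.sign w.2 * φ (w.1, |w.2|)) (Kodd φ z) z := by
  have hdiff : Differentiable ℝ φ := hφ.differentiable st8_le1
  rcases lt_trichotomy z.2 0 with hz | hz | hz
  · -- z.2 < 0 : locally -φ ∘ NL
    have hD : HasFDerivAt (fun w => -φ (NL w)) (-((fderiv ℝ φ (NL z)).comp NL)) z :=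
      (((hdiff (NL z)).hasFDerivAt).comp z NL.hasFDerivAt).neg
    have hK : Kodd φ z = -((fderiv ℝ φ (NL z)).comp NL) := by
      rw [clm_decomp (-((fderiv ℝ φ (NL z)).comp NL))]
      unfold Kodd
      rw [abs_of_neg hz, Real.sign_of_neg hz]
      congr 1
      · congr 1
        show -1 * p1 φ (z.1, -z.2) = -((fderiv ℝ φ (NL z)) (NL (1, 0)))
        rw [NL_apply, NL_apply]; norm_num [p1]
      · congr 1
        show p2 φ (z.1, -z.2) = -((fderiv ℝ φ (NL z)) (NL (0, 1)))
        rw [NL_apply, NL_apply]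
        have : ((0:ℝ), -(1:ℝ)) = -((0:ℝ),(1:ℝ)) := by simp [Prod.ext_iff]
        rw [this, map_neg]
        simp [p2]
    rw [hK]
    refine hD.congr_of_eventuallyEq ?_
    have hev : ∀ᶠ w : ℝ × ℝ in nhds z, w.2 < 0 :=
      (continuous_snd.tendsto z).eventually (eventually_lt_nhds hz)
    refine hev.mono fun w hw => ?_
    show Real.sign w.2 * φ (w.1, |w.2|) = -φ (NL w)
    rw [NL_apply, abs_of_neg hw, Real.sign_of_neg hw]
    ring
  · -- z.2 = 0
    rw [hasFDerivAt_iff_isLittleO_nhds_zero]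
    have hD : HasFDerivAt φ (fderiv ℝ φ (z.1, 0)) (z.1, 0) := (hdiff (z.1, 0)).hasFDerivAt
    have he := hasFDerivAt_iff_isLittleO_nhds_zero.mp hD
    have h1 := he.comp_tendsto tendsto_rho
    have h2 : ((fun w : ℝ × ℝ => w) ∘ fun w : ℝ × ℝ => ((w.1, |w.2|) : ℝ × ℝ)) =O[nhds 0]
        (fun w : ℝ × ℝ => w) := by
      apply Asymptotics.isBigO_of_le
      intro w
      show ‖((w.1, |w.2|) : ℝ × ℝ)‖ ≤ ‖w‖
      rw [norm_rho]
    have h3 := h1.trans_isBigO h2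
    have hp1z : fderiv ℝ φ (z.1, 0) (1, 0) = 0 := p1_zero_of_const hdiff h0 z.1
    have hφ0 : φ (z.1, 0) = 0 := h0 z.1
    -- the target equals sign(w.2) times the composed little-o function
    have hbound : ∀ w : ℝ × ℝ,
        ‖Real.sign (z + w).2 * φ ((z + w).1, |(z + w).2|) -
          Real.sign z.2 * φ (z.1, |z.2|) - Kodd φ z w‖ ≤
        ‖((fun h => φ ((z.1, 0) + h) - φ (z.1, 0) - fderiv ℝ φ (z.1, 0) h) ∘
          fun w : ℝ × ℝ => ((w.1, |w.2|) : ℝ × ℝ)) w‖ := by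
      intro w
      have eK : Kodd φ z w = p2 φ (z.1, 0) * w.2 := by
        unfold Kodd
        rw [hz]
        simp [Real.sign_zero, fstL, sndL]
      have eD : fderiv ℝ φ (z.1, 0) (w.1, |w.2|) = |w.2| * p2 φ (z.1, 0) := by
        rw [clm_apply_decomp, hp1z]
        simp [p2]
      have lhs_eq : Real.sign (z + w).2 * φ ((z + w).1, |(z + w).2|) -
          Real.sign z.2 * φ (z.1, |z.2|) - Kodd φ z w =
          Real.sign w.2 * (φ ((z.1, 0) + (w.1, |w.2|)) - φ (z.1, 0) -
            fderiv ℝ φ (z.1, 0) (w.1, |w.2|)) := by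
        rw [eK, eD]
        have hzw1 : (z + w).2 = w.2 := by rw [Prod.snd_add, hz, zero_add]
        have hzw2 : ((z + w).1, |(z + w).2|) = ((z.1, 0) + (w.1, |w.2|) : ℝ × ℝ) := by
          simp [Prod.ext_iff, hzw1, hz]
        rw [hzw2, hzw1, hz, abs_zero, hφ0, Real.sign_zero]
        have key : p2 φ (z.1, 0) * w.2 = Real.sign w.2 * (|w.2| * p2 φ (z.1, 0)) := by
          nth_rewrite 1 [← st8_sign_mul_abs w.2]
          ring
        rw [key]
        ring
      rw [lhs_eq]
      simp only [Function.comp_apply, Real.norm_eq_abs, abs_mul]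
      have := st8_abs_sign_le w.2
      have hnn : (0:ℝ) ≤ |φ ((z.1, 0) + (w.1, |w.2|)) - φ (z.1, 0) -
          fderiv ℝ φ (z.1, 0) (w.1, |w.2|)| := abs_nonneg _
      nlinarith
    exact (Asymptotics.isBigO_of_le _ hbound).trans_isLittleO h3
  · -- 0 < z.2
    have hD : HasFDerivAt φ (fderiv ℝ φ z) z := (hdiff z).hasFDerivAt
    have hK : Kodd φ z = fderiv ℝ φ z := by
      rw [clm_decomp (fderiv ℝ φ z)]
      unfold Kodd
      rw [abs_of_pos hz, Real.sign_of_pos hz, one_mul]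
      rfl
    rw [hK]
    refine hD.congr_of_eventuallyEq ?_
    have hev : ∀ᶠ w : ℝ × ℝ in nhds z, 0 < w.2 :=
      (continuous_snd.tendsto z).eventually (eventually_gt_nhds hz)
    refine hev.mono fun w hw => ?_
    show Real.sign w.2 * φ (w.1, |w.2|) = φ w
    rw [abs_of_pos hw, Real.sign_of_pos hw, one_mul]

end Refl2

section C2

lemma cont_p1 {F : ℝ × ℝ → ℝ} (hF : ContDiff ℝ (⊤:ℕ∞) F) : Continuous (p1 F) :=
  ((ContinuousLinearMap.apply ℝ ℝ ((1:ℝ), (0:ℝ))).continuous).comp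
    (hF.fderiv_right st8_succ).continuous

lemma cont_p2 {F : ℝ × ℝ → ℝ} (hF : ContDiff ℝ (⊤:ℕ∞) F) : Continuous (p2 F) :=
  ((ContinuousLinearMap.apply ℝ ℝ ((0:ℝ), (1:ℝ))).continuous).comp
    (hF.fderiv_right st8_succ).continuous

lemma cont_rho : Continuous fun w : ℝ × ℝ => ((w.1, |w.2|) : ℝ × ℝ) :=
  continuous_fst.prodMk continuous_snd.abs

lemma cont_signcomp {ψ : ℝ × ℝ → ℝ} (hψ : Continuous ψ) (h0 : ∀ s, ψ (s, 0) = 0) :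
    Continuous fun z : ℝ × ℝ => Real.sign z.2 * ψ (z.1, |z.2|) := by
  rw [continuous_iff_continuousAt]
  intro z
  rcases lt_trichotomy z.2 0 with hz | hz | hz
  · have hev : ∀ᶠ w : ℝ × ℝ in nhds z, w.2 < 0 :=
      (continuous_snd.tendsto z).eventually (eventually_lt_nhds hz)
    have hc : ContinuousAt (fun w : ℝ × ℝ => -ψ (w.1, -w.2)) z :=
      ((hψ.comp (continuous_fst.prodMk continuous_snd.neg)).neg).continuousAt
    exact hc.congr (hev.mono fun w hw => by
      show -ψ (w.1, -w.2) = Real.sign w.2 * ψ (w.1, |w.2|)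
      rw [abs_of_neg hw, Real.sign_of_neg hw]; ring)
  · have hval : Real.sign z.2 * ψ (z.1, |z.2|) = 0 := by
      rw [hz, Real.sign_zero, zero_mul]
    rw [ContinuousAt, hval]
    apply squeeze_zero_norm (a := fun w : ℝ × ℝ => |ψ (w.1, |w.2|)|)
    · intro w
      rw [Real.norm_eq_abs, abs_mul]
      nlinarith [st8_abs_sign_le w.2, abs_nonneg (ψ (w.1, |w.2|)),
        abs_nonneg (Real.sign w.2)]
    · have hcont : Continuous fun w : ℝ × ℝ => |ψ (w.1, |w.2|)| := (hψ.comp cont_rho).abs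
      have h := hcont.tendsto z
      have : |ψ (z.1, |z.2|)| = 0 := by rw [hz, abs_zero, h0 z.1, abs_zero]
      rwa [this] at h
  · have hev : ∀ᶠ w : ℝ × ℝ in nhds z, 0 < w.2 :=
      (continuous_snd.tendsto z).eventually (eventually_gt_nhds hz)
    have hc : ContinuousAt (fun w : ℝ × ℝ => ψ (w.1, w.2)) z :=
      (hψ.comp (continuous_fst.prodMk continuous_snd)).continuousAt
    exact hc.congr (hev.mono fun w hw => by
      show ψ (w.1, w.2) = Real.sign w.2 * ψ (w.1, |w.2|)
      rw [abs_of_pos hw, Real.sign_of_pos hw, one_mul])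

lemma evenC1 (F : ℝ × ℝ → ℝ) (hF : ContDiff ℝ (⊤:ℕ∞) F)
    (h0 : ∀ s, p2 F (s, 0) = 0) :
    ContDiff ℝ 1 (fun z : ℝ × ℝ => F (z.1, |z.2|)) := by
  rw [contDiff_one_iff_fderiv]
  refine ⟨fun z => (hasFDerivAt_even F hF h0 z).differentiableAt, ?_⟩
  have heq : (fderiv ℝ fun z : ℝ × ℝ => F (z.1, |z.2|)) = Keven F :=
    funext fun z => (hasFDerivAt_even F hF h0 z).fderiv
  rw [heq]
  show Continuous fun z : ℝ × ℝ =>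
    p1 F (z.1, |z.2|) • fstL + (Real.sign z.2 * p2 F (z.1, |z.2|)) • sndL
  exact ((((cont_p1 hF).comp cont_rho).smul continuous_const)).add
    ((cont_signcomp (cont_p2 hF) h0).smul continuous_const)

lemma oddC1 (φ : ℝ × ℝ → ℝ) (hφ : ContDiff ℝ (⊤:ℕ∞) φ)
    (h0 : ∀ s, φ (s, 0) = 0) :
    ContDiff ℝ 1 (fun z : ℝ × ℝ => Real.sign z.2 * φ (z.1, |z.2|)) := by
  rw [contDiff_one_iff_fderiv]
  refine ⟨fun z => (hasFDerivAt_odd φ hφ h0 z).differentiableAt, ?_⟩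
  have heq : (fderiv ℝ fun z : ℝ × ℝ => Real.sign z.2 * φ (z.1, |z.2|)) = Kodd φ :=
    funext fun z => (hasFDerivAt_odd φ hφ h0 z).fderiv
  rw [heq]
  show Continuous fun z : ℝ × ℝ =>
    (Real.sign z.2 * p1 φ (z.1, |z.2|)) • fstL + p2 φ (z.1, |z.2|) • sndL
  have hp10 : ∀ s, p1 φ (s, 0) = 0 :=
    fun s => p1_zero_of_const (hφ.differentiable st8_le1) h0 s
  exact ((cont_signcomp (cont_p1 hφ) hp10).smul continuous_const).add
    (((cont_p2 hφ).comp cont_rho).smul continuous_const)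

lemma evenC2 (F : ℝ × ℝ → ℝ) (hF : ContDiff ℝ (⊤:ℕ∞) F)
    (h0 : ∀ s, p2 F (s, 0) = 0) :
    ContDiff ℝ 2 (fun z : ℝ × ℝ => F (z.1, |z.2|)) := by
  have h21 : (2 : WithTop ℕ∞) = 1 + 1 := by norm_num
  rw [h21, contDiff_succ_iff_fderiv]
  refine ⟨fun z => (hasFDerivAt_even F hF h0 z).differentiableAt,
    fun h => absurd h (by norm_num), ?_⟩
  have heq : (fderiv ℝ fun z : ℝ × ℝ => F (z.1, |z.2|)) = Keven F :=
    funext fun z => (hasFDerivAt_even F hF h0 z).fderiv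
  rw [heq]
  -- C¹ of the first coefficient
  have hF1 : ContDiff ℝ (⊤:ℕ∞) (fun w => p1 F w) :=
    (hF.fderiv_right st8_succ).clm_apply contDiff_const
  have hF2 : ContDiff ℝ (⊤:ℕ∞) (fun w => p2 F w) :=
    (hF.fderiv_right st8_succ).clm_apply contDiff_const
  have h01 : ∀ s, p2 (fun w => p1 F w) (s, 0) = 0 := by
    intro s
    rw [swap_p F hF]
    exact p1_zero_of_const (hF2.differentiable st8_le1) h0 s
  have hA : ContDiff ℝ 1 (fun z : ℝ × ℝ => p1 F (z.1, |z.2|)) :=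
    evenC1 (fun w => p1 F w) hF1 h01
  have hB : ContDiff ℝ 1 (fun z : ℝ × ℝ => Real.sign z.2 * p2 F (z.1, |z.2|)) :=
    oddC1 (fun w => p2 F w) hF2 h0
  show ContDiff ℝ 1 fun z : ℝ × ℝ =>
    p1 F (z.1, |z.2|) • fstL + (Real.sign z.2 * p2 F (z.1, |z.2|)) • sndL
  exact (hA.smul contDiff_const).add (hB.smul contDiff_const)

end C2

section Sigma

lemma sigma_per (σ : ℝ → ℝ) (hσper : ∀ t, σ (t + 2) = σ t) :
    ∀ (k : ℤ) (t : ℝ), σ (t + 2 * (k : ℝ)) = σ t := by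
  intro k
  induction k using Int.induction_on with
  | zero => intro t; norm_num
  | succ i ih =>
    intro t
    push_cast
    rw [show t + 2 * ((i : ℝ) + 1) = (t + 2 * (i : ℝ)) + 2 by ring, hσper]
    have := ih t
    push_cast at this
    exact this
  | pred i ih =>
    intro t
    push_cast
    have h1 := hσper (t + 2 * (-(i : ℝ) - 1))
    rw [show t + 2 * (-(i : ℝ) - 1) + 2 = t + 2 * (-(i : ℝ)) by ring] at h1
    have h2 := ih t
    push_cast at h2
    rw [show t + 2 * (-(i : ℝ) - 1) = t + 2 * (-(i:ℝ) - 1) from rfl]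
    rw [← h2, ← h1]

lemma sigma_loc (σ : ℝ → ℝ) (hσper : ∀ t, σ (t + 2) = σ t)
    (hσ : ∀ t ∈ Icc (-1:ℝ) 1, σ t = |t|) (m : ℤ) :
    ∃ c : ℝ, (c = 0 ∨ c = 1) ∧ ∃ ε : ℝ, ∀ t : ℝ, |t - (m:ℝ)| < 1 →
      σ t = c + ε * |t - (m:ℝ)| := by
  rcases Int.even_or_odd m with ⟨k, hk⟩ | ⟨k, hk⟩
  · refine ⟨0, Or.inl rfl, 1, fun t ht => ?_⟩
    have hm : (m : ℝ) = 2 * (k : ℝ) := by rw [hk]; push_cast; ring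
    have hper := sigma_per σ hσper k (t - 2 * (k : ℝ))
    rw [show t - 2 * (k:ℝ) + 2 * (k:ℝ) = t by ring] at hper
    rw [hm] at ht
    have hmem : t - 2 * (k:ℝ) ∈ Icc (-1:ℝ) 1 := by
      rw [abs_lt] at ht
      constructor <;> [linarith [ht.1]; linarith [ht.2]]
    rw [hper, hσ _ hmem, hm]
    ring
  · refine ⟨1, Or.inr rfl, -1, fun t ht => ?_⟩
    have hm : (m : ℝ) = 2 * (k : ℝ) + 1 := by rw [hk]; push_cast; ring
    rw [hm] at ht
    rcases le_or_gt 0 (t - (2 * (k:ℝ) + 1)) with hh | hh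
    · have hper := sigma_per σ hσper (k + 1) (t - 2 * ((k:ℝ) + 1))
      rw [show t - 2 * ((k:ℝ) + 1) + 2 * ((k:ℤ) + 1 : ℤ) = t by push_cast; ring] at hper
      have hmem : t - 2 * ((k:ℝ) + 1) ∈ Icc (-1:ℝ) 1 := by
        rw [abs_lt] at ht
        constructor <;> [linarith [ht.2]; linarith [hh]]
      have habs : |t - 2 * ((k:ℝ) + 1)| = -(t - 2 * ((k:ℝ) + 1)) := by
        apply abs_of_nonpos
        rw [abs_lt] at ht
        linarith [ht.2]
      rw [hper, hσ _ hmem, habs, hm, abs_of_nonneg hh]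
      ring
    · have hper := sigma_per σ hσper k (t - 2 * (k:ℝ))
      rw [show t - 2 * (k:ℝ) + 2 * (k:ℝ) = t by ring] at hper
      have hmem : t - 2 * (k:ℝ) ∈ Icc (-1:ℝ) 1 := by
        rw [abs_lt] at ht
        constructor <;> [linarith [hh]; linarith [ht.1]]
      have habs : |t - 2 * (k:ℝ)| = t - 2 * (k:ℝ) := by
        apply abs_of_nonneg
        rw [abs_lt] at ht
        linarith [ht.1]
      rw [hper, hσ _ hmem, habs, hm, abs_of_neg hh]
      ring

end Sigma

/-- For a smooth solution `v = (q,p)` of the Floer equation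
`∂ₛv = −𝕁(∂ₜv − η(s)·X_{H₀}(v))` on `ℝ×[0,1]` with `q(s,0) = q₀`, `q(s,1) = q₁`, and `σ` the
even `2`-periodic extension of the identity on `[0,1]`, the function
`G(s,t) = |p(s,σ(t))|²/2` is `C²`. -/
theorem stmt8 (q0 q1 : R2) (v : ℝ × ℝ → Phase) (η : ℝ → ℝ)
    (hv : ContDiff ℝ (⊤ : ℕ∞) v) (hη : ContDiff ℝ (⊤ : ℕ∞) η)
    (hb0 : ∀ s : ℝ, (v (s, 0)).1 = q0) (hb1 : ∀ s : ℝ, (v (s, 1)).1 = q1)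
    (hFloer : ∀ s : ℝ, ∀ t ∈ Icc (0:ℝ) 1,
      deriv (fun a => v (a, t)) s =
        -JJ (deriv (fun b => v (s, b)) t - η s • XH0 (v (s, t))))
    (σ : ℝ → ℝ) (hσper : ∀ t, σ (t + 2) = σ t) (hσ : ∀ t ∈ Icc (-1:ℝ) 1, σ t = |t|) :
    ContDiff ℝ 2 fun z : ℝ × ℝ => sq2 (v (z.1, σ z.2)).2 / 2 := by
  have hvdiff : Differentiable ℝ v := hv.differentiable st8_le1
  set g : ℝ × ℝ → ℝ := fun z => sq2 (v z).2 / 2 with hgdef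
  have hgs : ContDiff ℝ (⊤:ℕ∞) g := by
    have hp : ContDiff ℝ (⊤:ℕ∞) fun z : ℝ × ℝ => (v z).2 := contDiff_snd.comp hv
    have h1 : ContDiff ℝ (⊤:ℕ∞) fun z : ℝ × ℝ => (v z).2.1 := contDiff_fst.comp hp
    have h2 : ContDiff ℝ (⊤:ℕ∞) fun z : ℝ × ℝ => (v z).2.2 := contDiff_snd.comp hp
    show ContDiff ℝ (⊤:ℕ∞) fun z : ℝ × ℝ => ((v z).2.1 ^ 2 + (v z).2.2 ^ 2) / 2
    exact ((h1.pow 2).add (h2.pow 2)).div_const 2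
  -- the boundary derivative vanishing
  have hbdry : ∀ c : ℝ, c ∈ Icc (0:ℝ) 1 → (∃ qc, ∀ a : ℝ, (v (a, c)).1 = qc) →
      ∀ s, p2 g (s, c) = 0 := by
    rintro c hmem ⟨qc, hqc⟩ s
    have hct : HasDerivAt (fun b => v (s, b)) (fderiv ℝ v (s, c) (0, 1)) c :=
      slice2 hvdiff s c
    have hcs : HasDerivAt (fun a => v (a, c)) (fderiv ℝ v (s, c) (1, 0)) s :=
      slice1 hvdiff s c
    set w : Phase := fderiv ℝ v (s, c) (0, 1) with hw
    set u : Phase := fderiv ℝ v (s, c) (1, 0) with hu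
    have hq : HasDerivAt (fun a => (v (a, c)).1) u.1 s :=
      (ContinuousLinearMap.fst ℝ R2 R2).hasFDerivAt.comp_hasDerivAt s hcs
    have hu1 : u.1 = 0 := by
      have h2 : HasDerivAt (fun _ : ℝ => qc) u.1 s :=
        hq.congr_of_eventuallyEq (Filter.Eventually.of_forall fun a => (hqc a).symm)
      exact h2.unique (hasDerivAt_const s qc)
    have hF := hFloer s c hmem
    rw [hcs.deriv, hct.deriv] at hF
    have h1 : u.1 = -((w - η s • XH0 (v (s, c))).2) := congrArg Prod.fst hF
    have h2 : (w - η s • XH0 (v (s, c))).2 = 0 := by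
      rw [hu1] at h1
      exact neg_eq_zero.mp h1.symm
    have hw2 : w.2 = η s • (XH0 (v (s, c))).2 := by
      have h3 : w.2 - (η s • XH0 (v (s, c))).2 = 0 := h2
      have h4 := sub_eq_zero.mp h3
      rw [h4]; rfl
    have hw21 : w.2.1 = η s * (v (s, c)).2.2 := by rw [hw2]; rfl
    have hw22 : w.2.2 = η s * (-(v (s, c)).2.1) := by
      rw [hw2]
      show η s • (-(v (s, c)).2.1) = _
      rw [smul_eq_mul]
    have hp1 : HasDerivAt (fun b => (v (s, b)).2.1) w.2.1 c :=
      ((ContinuousLinearMap.fst ℝ ℝ ℝ).comp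
        (ContinuousLinearMap.snd ℝ R2 R2)).hasFDerivAt.comp_hasDerivAt c hct
    have hp2 : HasDerivAt (fun b => (v (s, b)).2.2) w.2.2 c :=
      ((ContinuousLinearMap.snd ℝ ℝ ℝ).comp
        (ContinuousLinearMap.snd ℝ R2 R2)).hasFDerivAt.comp_hasDerivAt c hct
    have hgd : HasDerivAt (fun b => g (s, b))
        ((↑(2:ℕ) * (v (s, c)).2.1 ^ (2-1) * w.2.1 + ↑(2:ℕ) * (v (s, c)).2.2 ^ (2-1) * w.2.2) / 2) c :=
      ((hp1.pow 2).add (hp2.pow 2)).div_const 2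
    have hslice : HasDerivAt (fun b => g (s, b)) (p2 g (s, c)) c :=
      slice2 (hgs.differentiable st8_le1) s c
    have heq := hslice.unique hgd
    rw [heq, hw21, hw22]
    push_cast
    ring
  -- local structure and conclusion
  rw [contDiff_iff_contDiffAt]
  intro z
  obtain ⟨c, hc01, ε, hloc⟩ := sigma_loc σ hσper hσ (round z.2)
  set m : ℝ := ((round z.2 : ℤ) : ℝ) with hmdef
  set F : ℝ × ℝ → ℝ := fun w => g (w.1, ε * w.2 + c) with hFdef
  have hFs : ContDiff ℝ (⊤:ℕ∞) F :=
    hgs.comp (contDiff_fst.prodMk ((contDiff_const.mul contDiff_snd).add contDiff_const))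
  have h0F : ∀ s, p2 F (s, 0) = 0 := by
    intro s
    set Lε : ℝ × ℝ →L[ℝ] ℝ × ℝ :=
      (ContinuousLinearMap.fst ℝ ℝ ℝ).prod (ε • ContinuousLinearMap.snd ℝ ℝ ℝ) with hLdef
    have hl : HasFDerivAt (fun w : ℝ × ℝ => ((w.1, ε * w.2 + c) : ℝ × ℝ)) Lε (s, 0) := by
      have h1 : HasFDerivAt (fun w : ℝ × ℝ => Lε w + ((0:ℝ), c)) Lε (s, 0) :=
        Lε.hasFDerivAt.add_const ((0:ℝ), c)
      refine h1.congr_of_eventuallyEq (Filter.Eventually.of_forall fun w => ?_)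
      show ((w.1, ε * w.2 + c) : ℝ × ℝ) = Lε w + ((0:ℝ), c)
      have : Lε w = ((w.1, ε * w.2) : ℝ × ℝ) := rfl
      rw [this]
      simp [Prod.ext_iff]
    have hcomp : HasFDerivAt F ((fderiv ℝ g (s, ε * 0 + c)).comp Lε) (s, 0) :=
      by have h := ((hgs.differentiable st8_le1 (s, ε * 0 + c)).hasFDerivAt).comp (s, 0) hl; exact h
    have he1 : p2 F (s, 0) = fderiv ℝ g (s, ε * 0 + c) (Lε (0, 1)) := by
      show fderiv ℝ F (s, 0) (0, 1) = _
      rw [hcomp.fderiv]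
      rfl
    have he2 : Lε ((0:ℝ), (1:ℝ)) = ((0:ℝ), ε) := by
      show ((0:ℝ), ε • (1:ℝ)) = ((0:ℝ), ε)
      rw [smul_eq_mul, mul_one]
    have hcc : c ∈ Icc (0:ℝ) 1 := by rcases hc01 with h | h <;> simp [h]
    have hex : ∃ qc, ∀ a : ℝ, (v (a, c)).1 = qc := by
      rcases hc01 with h | h
      · exact ⟨q0, fun a => by rw [h]; exact hb0 a⟩
      · exact ⟨q1, fun a => by rw [h]; exact hb1 a⟩
    have hz0 := hbdry c hcc hex s
    rw [he1, he2, clm_apply_decomp]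
    have : fderiv ℝ g (s, ε * 0 + c) (0, 1) = p2 g (s, c) := by
      rw [show ε * 0 + c = c by ring]
      rfl
    rw [this, hz0]
    ring
  have hC2 : ContDiff ℝ 2 (fun w : ℝ × ℝ => F (w.1, |w.2|)) := evenC2 F hFs h0F
  have hτ : ContDiff ℝ 2 (fun w : ℝ × ℝ => ((w.1, w.2 - m) : ℝ × ℝ)) :=
    contDiff_fst.prodMk (contDiff_snd.sub contDiff_const)
  have hC2' : ContDiff ℝ 2 (fun w : ℝ × ℝ => F (w.1, |w.2 - m|)) := hC2.comp hτ
  refine hC2'.contDiffAt.congr_of_eventuallyEq ?_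
  have hopen : IsOpen {w : ℝ × ℝ | |w.2 - m| < 1} :=
    isOpen_lt ((continuous_snd.sub continuous_const).abs) continuous_const
  have hmem : z ∈ {w : ℝ × ℝ | |w.2 - m| < 1} := by
    have := abs_sub_round z.2
    simp only [mem_setOf_eq, hmdef]
    linarith
  filter_upwards [hopen.mem_nhds hmem] with w hw
  show sq2 (v (w.1, σ w.2)).2 / 2 = F (w.1, |w.2 - m|)
  rw [hloc w.2 hw]
  show sq2 (v (w.1, c + ε * |w.2 - m|)).2 / 2 = sq2 (v (w.1, ε * |w.2 - m| + c)).2 / 2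
  rw [add_comm c (ε * |w.2 - m|)]
end
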